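/- Fix an integer t ≥ 1. For every integer i ≥ 1, LCS(π_i, π_{i+1}, π_{i+2}) = 1. -/

import Mathlib

/-- Lexicographic "strictly smaller" for vectors in `Fin r → ℤ`. -/
def lexLt {r : ℕ} (x y : Fin r → ℤ) : Prop :=
  ∃ j : Fin r, (∀ i : Fin r, i < j → x i = y i) ∧ x j < y j

/-- The `u`-twisted order on the alphabet `[t]^r`: `a` weakly precedes `b` in `π(u)`
iff `a = b` or `(u₁a₁, …, u_r a_r)` is lexicographically smaller than
`(u₁b₁, …, u_r b_r)` (letters of `[t] = {1,…,t}` are represented by `Fin t`,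
with `a i : Fin t` standing for the letter `(a i : ℤ) + 1`). -/
def uLe {t r : ℕ} (u : Fin r → ℤ) (a b : Fin r → Fin t) : Prop :=
  a = b ∨ lexLt (fun i => u i * ((a i : ℤ) + 1)) (fun i => u i * ((b i : ℤ) + 1))

instance {t r : ℕ} (u : Fin r → ℤ) : DecidableRel (uLe (t := t) (r := r) u) := fun a b => by
  unfold uLe lexLt; infer_instance

/-- `piWord t r u = π(u)`: the word listing every element of the alphabet `[t]^r`
exactly once, in increasing `u`-twisted lexicographic order. -/
noncomputable def piWord (t r : ℕ) (u : Fin r → ℤ) : List (Fin r → Fin t) :=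
  (Finset.univ.toList (α := Fin r → Fin t)).mergeSort (fun a b => decide (uLe u a b))

/-- `LCS ws` is the length of a longest word that is a subsequence of every word in `ws`. -/
noncomputable def LCS {α : Type*} (ws : List (List α)) : ℕ :=
  sSup {L | ∃ x : List α, (∀ w ∈ ws, x.Sublist w) ∧ x.length = L}

/-- The eight sign vectors `u^{(1)}, …, u^{(8)}` (rows), with `+` as `1` and `-` as `-1`. -/
def uMat : Fin 8 → Fin 8 → ℤ :=
  ![![1, 1, 1, 1, 1, 1, 1, 1],
    ![-1, -1, -1, 1, -1, 1, -1, -1],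
    ![1, 1, 1, -1, -1, -1, -1, 1],
    ![-1, 1, -1, -1, 1, 1, 1, -1],
    ![1, -1, -1, 1, -1, -1, 1, 1],
    ![-1, 1, 1, 1, 1, -1, -1, -1],
    ![1, -1, -1, -1, 1, 1, -1, 1],
    ![-1, -1, 1, -1, -1, -1, 1, -1]]

/-- `uSeq i = u^{(i)}` for `i ≥ 1`: the periodic extension `u^{(i)} = u^{(i mod 8)}`,
with the representative of `i mod 8` taken in `{1,…,8}`. -/
def uSeq (i : ℕ) : Fin 8 → ℤ := uMat ⟨(i - 1) % 8, Nat.mod_lt _ (by norm_num)⟩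

/-- `piSeq t i = π_i = π(u^{(i)})`, a permutation of the alphabet `[t]^8`. -/
noncomputable def piSeq (t : ℕ) (i : ℕ) : List (Fin 8 → Fin t) := piWord t 8 (uSeq i)

set_option linter.unusedSectionVars false

section Aux

lemma lexLt_iff {r : ℕ} (x y : Fin r → ℤ) : lexLt x y ↔ toLex x < toLex y := Iff.rfl

lemma lexLt_trans {r : ℕ} {x y z : Fin r → ℤ} (h1 : lexLt x y) (h2 : lexLt y z) :
    lexLt x z := by
  have : IsTrans (Lex (Fin r → ℤ)) (· < ·) := inferInstance
  exact (lexLt_iff _ _).2 (this.trans (toLex x) (toLex y) (toLex z)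
    ((lexLt_iff _ _).1 h1) ((lexLt_iff _ _).1 h2))

lemma lexLt_trichotomy {r : ℕ} (x y : Fin r → ℤ) : lexLt x y ∨ x = y ∨ lexLt y x := by
  have := (Pi.isTrichotomous_lex (β := fun _ : Fin r => ℤ) (· < ·)
    (@fun _ => (· < ·)) (wellFounded_lt)).trichotomous x y
  by_cases h1 : lexLt x y
  · exact Or.inl h1
  by_cases h2 : lexLt y x
  · exact Or.inr (Or.inr h2)
  exact Or.inr (Or.inl (this h1 h2))

variable {t r : ℕ} {u : Fin r → ℤ} (hu : ∀ j, u j ≠ 0)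

def twist (u : Fin r → ℤ) (a : Fin r → Fin t) : Fin r → ℤ := fun i => u i * ((a i : ℤ) + 1)

include hu in
lemma twist_inj {a b : Fin r → Fin t} (h : twist u a = twist u b) : a = b := by
  funext j
  have := congrFun h j
  simp only [twist] at this
  have h2 : ((a j : ℤ) + 1) = ((b j : ℤ) + 1) := mul_left_cancel₀ (hu j) this
  have : (a j : ℤ) = (b j : ℤ) := by omega
  exact Fin.ext (by exact_mod_cast this)

include hu in
lemma uLe_trans (a b c : Fin r → Fin t) (hab : uLe u a b) (hbc : uLe u b c) : uLe u a c := by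
  rcases hab with rfl | hab
  · exact hbc
  rcases hbc with rfl | hbc
  · exact Or.inr hab
  exact Or.inr (lexLt_trans hab hbc)

include hu in
lemma uLe_total (a b : Fin r → Fin t) : uLe u a b ∨ uLe u b a := by
  rcases eq_or_ne a b with rfl | hne
  · exact Or.inl (Or.inl rfl)
  rcases lexLt_trichotomy (twist u a) (twist u b) with h | h | h
  · exact Or.inl (Or.inr h)
  · exact absurd (twist_inj hu h) hne
  · exact Or.inr (Or.inr h)

include hu in
/-- From a pair in order in `piWord`, extract the first differing coordinate. -/
lemma pair_in_piWord {a b : Fin r → Fin t}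
    (h : [a, b].Sublist (piWord t r u)) :
    ∃ j : Fin r, (∀ i : Fin r, i < j → a i = b i) ∧
      u j * ((a j : ℤ) + 1) < u j * ((b j : ℤ) + 1) := by
  have hnd : (piWord t r u).Nodup :=
    (List.mergeSort_perm _ _).nodup_iff.2 (Finset.nodup_toList _)
  have hne : a ≠ b := by
    have := h.nodup hnd
    simp at this; exact this
  have hsorted : (piWord t r u).Pairwise (fun a b => decide (uLe u a b) = true) := by
    apply List.pairwise_mergeSort
    · intro x y z hx hy
      exact decide_eq_true (uLe_trans hu x y z (of_decide_eq_true hx) (of_decide_eq_true hy))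
    · intro x y
      rcases uLe_total hu x y with h' | h' <;> simp [h']
  have hle : uLe u a b := by
    have := List.Pairwise.sublist h hsorted
    simp only [List.pairwise_cons] at this
    exact of_decide_eq_true (this.1 b (List.mem_singleton_self b))
  rcases hle with rfl | hlt
  · exact absurd rfl hne
  obtain ⟨j, hpre, hj⟩ := hlt
  refine ⟨j, fun i hi => ?_, hj⟩
  have := hpre i hi
  have h2 : ((a i : ℤ) + 1) = ((b i : ℤ) + 1) := mul_left_cancel₀ (hu i) this
  have : (a i : ℤ) = (b i : ℤ) := by omega
  exact Fin.ext (by exact_mod_cast this)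

end Aux

lemma uMat_pm : ∀ m j : Fin 8, uMat m j = 1 ∨ uMat m j = -1 := by decide

lemma uMat_not_const : ∀ m j : Fin 8,
    ¬(uMat m j = uMat (m + 1) j ∧ uMat m j = uMat (m + 2) j) := by decide

open Fin.NatCast in
lemma uSeq_succ (i : ℕ) (hi : 1 ≤ i) (k : ℕ) :
    uSeq (i + k) = uMat (⟨(i - 1) % 8, Nat.mod_lt _ (by norm_num)⟩ + (k : Fin 8)) := by
  unfold uSeq
  have harg : (⟨(i + k - 1) % 8, Nat.mod_lt _ (by norm_num)⟩ : Fin 8) =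
      ⟨(i - 1) % 8, Nat.mod_lt _ (by norm_num)⟩ + (k : Fin 8) := by
    apply Fin.ext
    simp only [Fin.add_def, Fin.val_natCast]
    omega
  rw [harg]

/-- For `t ≥ 1` and every `i ≥ 1`, `LCS(π_i, π_{i+1}, π_{i+2}) = 1`. -/
theorem stmt15 (t : ℕ) (ht : 1 ≤ t) (i : ℕ) (hi : 1 ≤ i) :
    LCS [piSeq t i, piSeq t (i + 1), piSeq t (i + 2)] = 1 := by
  classical
  have hu : ∀ k : ℕ, ∀ j : Fin 8, uSeq k j ≠ 0 := by
    intro k j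
    rcases uMat_pm ⟨(k - 1) % 8, Nat.mod_lt _ (by norm_num)⟩ j with h | h <;>
      · show uMat _ j ≠ 0
        rw [h]; norm_num
  set S : Set ℕ :=
    {L | ∃ x : List (Fin 8 → Fin t),
      (∀ w ∈ [piSeq t i, piSeq t (i + 1), piSeq t (i + 2)], x.Sublist w) ∧ x.length = L}
    with hSdef
  have hmem : (1 : ℕ) ∈ S := by
    refine ⟨[fun _ => ⟨0, ht⟩], fun w hw => ?_, rfl⟩
    have hmemw : ∀ k : ℕ, (fun _ => (⟨0, ht⟩ : Fin t)) ∈ piSeq t k := by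
      intro k
      show _ ∈ piWord t 8 (uSeq k)
      unfold piWord
      rw [List.mem_mergeSort]
      simp [Finset.mem_toList]
    simp only [List.mem_cons, List.not_mem_nil, or_false] at hw
    rcases hw with rfl | rfl | rfl <;> exact List.singleton_sublist.2 (hmemw _)
  have hb : ∀ L ∈ S, L ≤ 1 := by
    rintro L ⟨x, hx, rfl⟩
    by_contra hlen
    push_neg at hlen
    match x, hlen with
    | a :: b :: rest, _ =>
      have hab : [a, b].Sublist (a :: b :: rest) :=
        ((List.nil_sublist rest).cons₂ b).cons₂ a
      have h1 := pair_in_piWord (hu i) (hab.trans (hx (piSeq t i) (by simp)))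
      have h2 := pair_in_piWord (hu (i + 1)) (hab.trans (hx (piSeq t (i + 1)) (by simp)))
      have h3 := pair_in_piWord (hu (i + 2)) (hab.trans (hx (piSeq t (i + 2)) (by simp)))
      obtain ⟨j1, hp1, hl1⟩ := h1
      obtain ⟨j2, hp2, hl2⟩ := h2
      obtain ⟨j3, hp3, hl3⟩ := h3
      have hne1 : a j1 ≠ b j1 := fun h => by rw [h] at hl1; exact lt_irrefl _ hl1
      have hne2 : a j2 ≠ b j2 := fun h => by rw [h] at hl2; exact lt_irrefl _ hl2
      have hne3 : a j3 ≠ b j3 := fun h => by rw [h] at hl3; exact lt_irrefl _ hl3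
      have e12 : j1 = j2 := by
        rcases lt_trichotomy j1 j2 with h | h | h
        · exact absurd (hp2 j1 h) hne1
        · exact h
        · exact absurd (hp1 j2 h) hne2
      have e13 : j1 = j3 := by
        rcases lt_trichotomy j1 j3 with h | h | h
        · exact absurd (hp3 j1 h) hne1
        · exact h
        · exact absurd (hp1 j3 h) hne3
      subst e12; subst e13
      set m : Fin 8 := ⟨(i - 1) % 8, Nat.mod_lt _ (by norm_num)⟩ with hm
      have hu1 : uSeq i = uMat m := rfl
      have hu2 : uSeq (i + 1) = uMat (m + 1) := by
        rw [uSeq_succ i hi 1]; norm_num; rfl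
      have hu3 : uSeq (i + 2) = uMat (m + 2) := by
        rw [uSeq_succ i hi 2]; norm_num; rfl
      rw [hu1] at hl1; rw [hu2] at hl2; rw [hu3] at hl3
      rcases uMat_pm m j1 with e | e <;> rw [e] at hl1 <;>
        rcases uMat_pm (m + 1) j1 with e2 | e2 <;> rw [e2] at hl2 <;>
          rcases uMat_pm (m + 2) j1 with e3 | e3 <;> rw [e3] at hl3 <;>
            first
            | linarith
            | exact (uMat_not_const m j1) ⟨e.trans e2.symm, e.trans e3.symm⟩
  show sSup S = 1
  exact le_antisymm (csSup_le ⟨1, hmem⟩ hb) (le_csSup ⟨1, hb⟩ hmem)
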